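/- Let m = 6j−1 be prime and let n ≡ 0 (mod 6m) be positive. Then the statistic c(λ) = (λ₁ − λ₃) mod m takes each value in {0,1,...,m−1} on exactly p(n,3)/m partitions λ of n into exactly 3 positive parts. -/

import Mathlib

open Finset

/-!
Moving one unit from `λ₂` to `λ₁` raises `c(λ)` by one and maps the partitions with `λ₂ > λ₃`
bijectively onto those with `λ₁ ≥ λ₂ + 2`. Hence the classes `c ≡ r` and `c ≡ r + 1 (mod m)`
differ only through the boundary families `λ₂ = λ₃` (class `r`) and `λ₁ ∈ {λ₂, λ₂ + 1}`
(class `r + 1`). For `n = 6K` with `m ∣ K` each boundary family is parametrized by an interval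
whose length is a multiple of `m`, on which `c` is affine with slope `±3`; as `3` is invertible
mod `m`, both families meet every residue class exactly `2K / m` times. So all classes have the
same size `p(n,3) / m`.
-/

/-- The set of partitions of `n` into exactly 3 positive parts, as triples
`(a, b, c)` with `a ≥ b ≥ c ≥ 1` and `a + b + c = n`. -/
def P3 (n : ℕ) : Finset (ℕ × ℕ × ℕ) :=
  (Finset.range (n+1) ×ˢ Finset.range (n+1) ×ˢ Finset.range (n+1)).filter
    (fun t => t.2.1 ≤ t.1 ∧ t.2.2 ≤ t.2.1 ∧ 1 ≤ t.2.2 ∧ t.1 + t.2.1 + t.2.2 = n)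

/-- `p3 n` is the number of partitions of `n` into exactly 3 positive parts. -/
def p3 (n : ℕ) : ℕ := (P3 n).card

theorem card_filter_range_mul_affine_eq {m : ℕ} [NeZero m] {u : ZMod m} (hu : IsUnit u)
    (s r : ZMod m) (T : ℕ) : #{d ∈ range (m * T) | u * (d : ℕ) + s = r} = T := by
  have hsol (d : ℕ) : u * d + s = r ↔ d ≡ (hu.unit⁻¹ * (r - s)).val [MOD m] := by
    rw [← ZMod.natCast_eq_natCast_iff, ZMod.natCast_zmod_val, Units.eq_inv_mul_iff_mul_eq,
      IsUnit.unit_spec, eq_sub_iff_add_eq]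
  simp_rw [hsol, ← Nat.count_eq_card_filter_range, Nat.count_modEq_card _ (NeZero.pos m)]
  simp [NeZero.pos m]

theorem card_filter_image_range_eq {α : Type*} [DecidableEq α] {m : ℕ} [NeZero m] {f : ℕ → α}
    (hf : Function.Injective f) {g : α → ZMod m} {u s : ZMod m} (hu : IsUnit u) {T : ℕ}
    (hg : ∀ d < m * T, g (f d) = u * d + s) (r : ZMod m) :
    #{x ∈ (range (m * T)).image f | g x = r} = T := by
  have hfiber :
      {d ∈ range (m * T) | g (f d) = r} = {d ∈ range (m * T) | u * (d : ℕ) + s = r} :=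
    filter_congr fun d hd => by rw [hg d (mem_range.mp hd)]
  rw [filter_image, card_image_of_injective _ hf, hfiber, card_filter_range_mul_affine_eq hu]

theorem ZMod.natCast_eq_neg_of_add_eq_mul {m x y z : ℕ} (h : x + y = m * z) :
    (x : ZMod m) = -y := by
  rw [eq_neg_iff_add_eq_zero, ← Nat.cast_add, h, Nat.cast_mul, ZMod.natCast_self, zero_mul]

theorem mem_P3 {n a b c : ℕ} : (a, b, c) ∈ P3 n ↔ b ≤ a ∧ c ≤ b ∧ 1 ≤ c ∧ a + b + c = n := by
  simp only [P3, mem_filter, mem_product, mem_range]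
  omega

theorem P3_filter_snd_eq_thd (K : ℕ) :
    {x ∈ P3 (6 * K) | x.2.1 = x.2.2} =
      (range (2 * K)).image fun d => (6 * K - 2 * (d + 1), d + 1, d + 1) := by
  ext ⟨a, b, c⟩
  simp only [mem_filter, mem_P3, mem_image, mem_range, Prod.mk.injEq]
  constructor
  · rintro ⟨h, rfl⟩
    exact ⟨b - 1, by omega, by omega, by omega, by omega⟩
  · rintro ⟨d, hd, rfl, rfl, rfl⟩
    omega

theorem P3_filter_fst_eq_snd (K : ℕ) :
    {x ∈ P3 (6 * K) | x.1 = x.2.1} =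
      (range K).image fun d => (2 * K + d, 2 * K + d, 2 * K - 2 * d) := by
  ext ⟨a, b, c⟩
  simp only [mem_filter, mem_P3, mem_image, mem_range, Prod.mk.injEq]
  constructor
  · rintro ⟨h, rfl⟩
    exact ⟨a - 2 * K, by omega, by omega, by omega, by omega⟩
  · rintro ⟨d, hd, rfl, rfl, rfl⟩
    omega

theorem P3_filter_fst_eq_snd_add_one (K : ℕ) :
    {x ∈ P3 (6 * K) | x.1 = x.2.1 + 1} =
      (range K).image fun d => (2 * K + d + 1, 2 * K + d, 2 * K - 2 * d - 1) := by
  ext ⟨a, b, c⟩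
  simp only [mem_filter, mem_P3, mem_image, mem_range, Prod.mk.injEq]
  constructor
  · rintro ⟨h, rfl⟩
    exact ⟨b - 2 * K, by omega, by omega, by omega, by omega⟩
  · rintro ⟨d, hd, rfl, rfl, rfl⟩
    omega

theorem P3_filter_not_snd_add_two_le (n : ℕ) :
    {x ∈ P3 n | ¬ x.2.1 + 2 ≤ x.1} = {x ∈ P3 n | x.1 = x.2.1} ∪ {x ∈ P3 n | x.1 = x.2.1 + 1} := by
  rw [← filter_or]
  refine filter_congr fun ⟨a, b, c⟩ hx => ?_
  rw [mem_P3] at hx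
  show ¬ b + 2 ≤ a ↔ a = b ∨ a = b + 1
  omega

/-- The statistic `c(λ) = λ₁ - λ₃`, with values in `ZMod m`. -/
def spreadMod (m : ℕ) (x : ℕ × ℕ × ℕ) : ZMod m := ((x.1 - x.2.2 : ℕ) : ZMod m)

theorem spreadMod_succ_fst {m a b c : ℕ} (b' : ℕ) (h : c ≤ a) :
    spreadMod m (a + 1, b', c) = spreadMod m (a, b, c) + 1 := by
  simp only [spreadMod, Nat.sub_add_comm h, Nat.cast_succ]

theorem card_spreadMod_filter_snd_ne {m : ℕ} (n : ℕ) (r : ZMod m) :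
    #{x ∈ {x ∈ P3 n | spreadMod m x = r} | x.2.1 ≠ x.2.2} =
      #{x ∈ {x ∈ P3 n | spreadMod m x = r + 1} | x.2.1 + 2 ≤ x.1} := by
  refine card_nbij' (fun x => (x.1 + 1, x.2.1 - 1, x.2.2)) (fun x => (x.1 - 1, x.2.1 + 1, x.2.2))
    ?_ ?_ ?_ ?_
  · rintro ⟨a, b, c⟩ hx
    simp only [mem_coe, mem_filter, mem_P3] at hx ⊢
    obtain ⟨⟨hP, rfl⟩, hbc⟩ := hx
    exact ⟨⟨by omega, spreadMod_succ_fst _ (by omega)⟩, by omega⟩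
  · rintro ⟨a, b, c⟩ hx
    simp only [mem_coe, mem_filter, mem_P3] at hx ⊢
    obtain ⟨⟨hP, hr⟩, hab⟩ := hx
    have ha : a - 1 + 1 = a := by omega
    rw [← ha, spreadMod_succ_fst _ (by omega), add_left_inj] at hr
    exact ⟨⟨by omega, hr⟩, by omega⟩
  · rintro ⟨a, b, c⟩ hx
    simp only [mem_coe, mem_filter, mem_P3] at hx
    simp only [Prod.mk.injEq, and_true]
    omega
  · rintro ⟨a, b, c⟩ hx
    simp only [mem_coe, mem_filter, mem_P3] at hx
    simp only [Prod.mk.injEq, and_true]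
    omega

section ResidueClasses

variable {m : ℕ} [NeZero m]

theorem card_spreadMod_filter_snd_eq (h3 : IsUnit (3 : ZMod m)) (k : ℕ) (r : ZMod m) :
    #{x ∈ {x ∈ P3 (6 * (m * k)) | spreadMod m x = r} | x.2.1 = x.2.2} = 2 * k := by
  rw [filter_comm, P3_filter_snd_eq_thd, show 2 * (m * k) = m * (2 * k) by ring]
  refine card_filter_image_range_eq (fun d d' h => by simp only [Prod.mk.injEq] at h; omega)
    h3.neg (s := -3) (fun d hd => ?_) r
  simp only [spreadMod]
  have h2 : m * (2 * k) = 2 * (m * k) := by ring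
  have h6 : m * (6 * k) = 6 * (m * k) := by ring
  rw [ZMod.natCast_eq_neg_of_add_eq_mul (y := 3 * d + 3) (z := 6 * k) (by omega)]
  push_cast
  ring

theorem card_spreadMod_filter_not_le (h3 : IsUnit (3 : ZMod m)) (k : ℕ) (r : ZMod m) :
    #{x ∈ {x ∈ P3 (6 * (m * k)) | spreadMod m x = r} | ¬ x.2.1 + 2 ≤ x.1} = 2 * k := by
  have hdisj : Disjoint {x ∈ P3 (6 * (m * k)) | x.1 = x.2.1}
      {x ∈ P3 (6 * (m * k)) | x.1 = x.2.1 + 1} :=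
    disjoint_filter.mpr fun x _ h => by omega
  have hinj {f : ℕ → ℕ × ℕ × ℕ} (hf : ∀ d, (f d).2.1 = 2 * (m * k) + d) : Function.Injective f :=
    fun d d' h => by have := congrArg (·.2.1) h; simp only [hf] at this; omega
  rw [filter_comm, P3_filter_not_snd_add_two_le, filter_union,
    card_union_of_disjoint (disjoint_filter_filter hdisj), P3_filter_fst_eq_snd,
    P3_filter_fst_eq_snd_add_one,
    card_filter_image_range_eq (hinj fun _ => rfl) h3 (s := 0) (fun d hd => ?_) r,
    card_filter_image_range_eq (hinj fun _ => rfl) h3 (s := 2) (fun d hd => ?_) r, two_mul]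
  · simp only [spreadMod]
    rw [show 2 * (m * k) + d + 1 - (2 * (m * k) - 2 * d - 1) = 3 * d + 2 by omega]
    push_cast
    ring
  · simp only [spreadMod]
    rw [show 2 * (m * k) + d - (2 * (m * k) - 2 * d) = 3 * d by omega]
    push_cast
    ring

theorem card_spreadMod_add_one (h3 : IsUnit (3 : ZMod m)) (k : ℕ) (r : ZMod m) :
    #{x ∈ P3 (6 * (m * k)) | spreadMod m x = r + 1} =
      #{x ∈ P3 (6 * (m * k)) | spreadMod m x = r} := by
  rw [← card_filter_add_card_filter_not (s := {x ∈ P3 _ | spreadMod m x = r + 1})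
      (fun x => x.2.1 + 2 ≤ x.1),
    ← card_filter_add_card_filter_not (s := {x ∈ P3 _ | spreadMod m x = r})
      (fun x => x.2.1 = x.2.2),
    card_spreadMod_filter_not_le h3 k, card_spreadMod_filter_snd_eq h3 k,
    card_spreadMod_filter_snd_ne, add_comm]

theorem card_spreadMod_eq_card_spreadMod_zero (h3 : IsUnit (3 : ZMod m)) (k : ℕ) (r : ZMod m) :
    #{x ∈ P3 (6 * (m * k)) | spreadMod m x = r} =
      #{x ∈ P3 (6 * (m * k)) | spreadMod m x = 0} := by
  rw [← ZMod.natCast_zmod_val r]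
  induction r.val with
  | zero => rw [Nat.cast_zero]
  | succ j ih => rw [Nat.cast_succ, card_spreadMod_add_one h3, ih]

end ResidueClasses

theorem p3_eq_mul_card_spreadMod {m n : ℕ} [NeZero m] (h3 : IsUnit (3 : ZMod m))
    (hn : 6 * m ∣ n) (r : ZMod m) : p3 n = m * #{x ∈ P3 n | spreadMod m x = r} := by
  obtain ⟨k, rfl⟩ : ∃ k, n = 6 * (m * k) := by
    obtain ⟨k, rfl⟩ := hn
    exact ⟨k, by ring⟩
  rw [p3, card_eq_sum_card_fiberwise (f := spreadMod m) (t := univ)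
      fun _ _ => mem_coe.2 (mem_univ _),
    sum_congr rfl fun r' _ => card_spreadMod_eq_card_spreadMod_zero h3 k r',
    card_spreadMod_eq_card_spreadMod_zero h3 k r, sum_const, card_univ, ZMod.card, smul_eq_mul]

theorem stmt13_general (j m : ℕ) (hj : m = 6 * j - 1) (hm : m.Prime) (n : ℕ)
    (hmod : 6 * m ∣ n) (i : ℕ) (hi : i < m) :
    ((P3 n).filter (fun t => (t.1 - t.2.2) % m = i)).card = p3 n / m := by
  have : NeZero m := ⟨hm.ne_zero⟩
  have h3 : IsUnit (3 : ZMod m) := by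
    exact_mod_cast (ZMod.isUnit_iff_coprime 3 m).mpr
      ((Nat.coprime_primes Nat.prime_three hm).mpr (by omega))
  have hfiber :
      (P3 n).filter (fun t => (t.1 - t.2.2) % m = i) = {x ∈ P3 n | spreadMod m x = i} :=
    filter_congr fun x _ => by rw [spreadMod, ZMod.natCast_eq_natCast_iff', Nat.mod_eq_of_lt hi]
  rw [hfiber, p3_eq_mul_card_spreadMod h3 hmod i, Nat.mul_div_cancel_left _ hm.pos]

theorem stmt13 (j m : ℕ) (hj : m = 6 * j - 1) (hm : m.Prime) (n : ℕ) (hn : 0 < n)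
    (hmod : 6 * m ∣ n) (i : ℕ) (hi : i < m) :
    ((P3 n).filter (fun t => (t.1 - t.2.2) % m = i)).card = p3 n / m :=
  stmt13_general j m hj hm n hmod i hi
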